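/- arXiv:1006.4276 — 9 statements merged into one kernel-verified Lean document; each statement's English description precedes it below -/
import Mathlib

section
/- Let B be an n×n integer matrix and let D be a diagonal integer matrix with positive diagonal entries such that BD is skew-symmetric. Then for every index k, the matrix μ_k(B)·D is skew-symmetric. In particular, mutation preserves skew-symmetrizability, with the same skew-symmetrizer D. -/
open Matrix

/-- Matrix mutation in direction `k`. -/
def mutate {n : ℕ} (B : Matrix (Fin n) (Fin n) ℤ) (k : Fin n) : Matrix (Fin n) (Fin n) ℤ :=
  Matrix.of fun i j =>
    if i = k ∨ j = k then -B i j
    else B i j + (|B i k| * B k j + B i k * |B k j|) / 2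

/-- The mutation class of `B`: all matrices obtained from `B` by finite sequences of mutations. -/
def mutationClass {n : ℕ} (B : Matrix (Fin n) (Fin n) ℤ) : Set (Matrix (Fin n) (Fin n) ℤ) :=
  {B' | ∃ l : List (Fin n), B' = l.foldl mutate B}

/-- `B` is skew-symmetrizable: there are positive integers `d i` with `b_ij d_j = -(b_ji d_i)`. -/
def IsSkewSymmetrizable {n : ℕ} (B : Matrix (Fin n) (Fin n) ℤ) : Prop :=
  ∃ d : Fin n → ℤ, (∀ i, 0 < d i) ∧ ∀ i j, B i j * d j = -(B j i * d i)

lemma key_arith (x y x' y' di dj dk bij bji : ℤ) (hdk : 0 < dk)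
    (hb : bij * dj = -(bji * di))
    (hy : y * dj = -(x' * dk)) (hx : x * dk = -(y' * di))
    (hay : |y| * dj = |x'| * dk) (hay' : |y'| * di = |x| * dk) :
    (bij + (|x| * y + x * |y|) / 2) * dj = -((bji + (|x'| * y' + x' * |y'|) / 2) * di) := by
  have h2 : (2:ℤ) ∣ |x| * y + x * |y| := by
    rcases abs_choice x with h | h <;> rcases abs_choice y with h' | h' <;> rw [h, h'] <;>
      [exact ⟨x * y, by ring⟩; exact ⟨0, by ring⟩; exact ⟨0, by ring⟩; exact ⟨-(x * y), by ring⟩]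
  have h2' : (2:ℤ) ∣ |x'| * y' + x' * |y'| := by
    rcases abs_choice x' with h | h <;> rcases abs_choice y' with h' | h' <;> rw [h, h'] <;>
      [exact ⟨x' * y', by ring⟩; exact ⟨0, by ring⟩; exact ⟨0, by ring⟩; exact ⟨-(x' * y'), by ring⟩]
  obtain ⟨a, ha⟩ := h2
  obtain ⟨a', ha'⟩ := h2'
  rw [ha, ha', Int.mul_ediv_cancel_left _ two_ne_zero, Int.mul_ediv_cancel_left _ two_ne_zero]
  apply mul_right_cancel₀ (b := 2 * dk) (by positivity)
  linear_combination (2 * dk) * hb - (dj * dk) * ha - (di * dk) * ha' +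
    (|x| * dk) * hy + (x * dk) * hay + (|x'| * dk) * hx + (x' * dk) * hay'

/-- Mutation preserves skew-symmetrizability with the same skew-symmetrizer `D`. -/
theorem mutate_skewSymmetrizer {n : ℕ} (B : Matrix (Fin n) (Fin n) ℤ)
    (d : Fin n → ℤ) (hd : ∀ i, 0 < d i)
    (hskew : (B * Matrix.diagonal d)ᵀ = -(B * Matrix.diagonal d)) (k : Fin n) :
    (mutate B k * Matrix.diagonal d)ᵀ = -(mutate B k * Matrix.diagonal d) := by
  have h : ∀ i j, B i j * d j = -(B j i * d i) := by
    intro i j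
    have := congrFun (congrFun hskew j) i
    simpa [Matrix.mul_diagonal] using this
  have habs : ∀ i j : Fin n, |B i j| * d j = |B j i| * d i := by
    intro i j
    have := congrArg abs (h i j)
    rwa [abs_mul, abs_neg, abs_mul, abs_of_pos (hd j), abs_of_pos (hd i)] at this
  ext i j
  simp only [Matrix.transpose_apply, Matrix.neg_apply, Matrix.mul_diagonal, mutate,
    Matrix.of_apply]
  by_cases hik : i = k
  · simp [hik]
    linarith [h j k]
  by_cases hjk : j = k
  · simp [hjk, hik]
    linarith [h j i, hjk ▸ h j i]
  · simp only [hik, hjk, or_self, if_false, if_neg (by tauto : ¬(j = k ∨ i = k))]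
    exact key_arith (B j k) (B k i) (B i k) (B k j) (d j) (d i) (d k) (B j i) (B i j)
      (hd k) (h j i) (h k i) (h j k) (habs k i) (habs k j)
end

section
/- Every principal submatrix of a mutation-finite skew-symmetrizable matrix is mutation-finite: if B is a skew-symmetrizable n×n integer matrix with finite mutation class and f : {1,…,m} → {1,…,n} is injective, then the principal submatrix of B with rows and columns f(1), …, f(m) also has finite mutation class. -/
open Matrix

lemma mutate_submatrix {n m : ℕ} (B : Matrix (Fin n) (Fin n) ℤ)
    (f : Fin m → Fin n) (hf : Function.Injective f) (k : Fin m) :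
    mutate (B.submatrix f f) k = (mutate B (f k)).submatrix f f := by
  ext i j
  simp only [mutate, submatrix_apply, of_apply, hf.eq_iff]

lemma foldl_mutate_submatrix {n m : ℕ} (f : Fin m → Fin n) (hf : Function.Injective f)
    (l : List (Fin m)) : ∀ B : Matrix (Fin n) (Fin n) ℤ,
    l.foldl mutate (B.submatrix f f) = ((l.map f).foldl mutate B).submatrix f f := by
  induction l with
  | nil => intro B; rfl
  | cons k l ih =>
      intro B
      simp only [List.foldl_cons, List.map_cons, mutate_submatrix B f hf k]
      exact ih _

/-- Every principal submatrix of a mutation-finite skew-symmetrizable matrix is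
mutation-finite. -/
theorem submatrix_mutationFinite {n m : ℕ} (B : Matrix (Fin n) (Fin n) ℤ)
    (hB : IsSkewSymmetrizable B) (hfin : (mutationClass B).Finite)
    (f : Fin m → Fin n) (hf : Function.Injective f) :
    (mutationClass (B.submatrix f f)).Finite := by
  apply (hfin.image (fun M => M.submatrix f f)).subset
  rintro _ ⟨l, rfl⟩
  exact ⟨(l.map f).foldl mutate B, ⟨l.map f, rfl⟩, (foldl_mutate_submatrix f hf l B).symm⟩
end

section
/- Let B be a skew-symmetrizable n×n integer matrix with n ≥ 3 whose diagram is connected. Then B has finite mutation class if and only if every matrix B' mutation-equivalent to B satisfies |b'_ij · b'_ji| ≤ 4 for all i, j (i.e., no diagram in the mutation class contains an edge of weight greater than 4). -/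
open Matrix

/-!
If every weight in the mutation class is at most `4`, every entry is at most `4` in absolute value
(for a skew-symmetrizable matrix `b_ij = 0` iff `b_ji = 0`), so the class is finite.

Conversely, an edge of weight `> 4` and a vertex adjacent to it (connectedness and `n ≥ 3`) can be
turned by at most two mutations into an oriented triangle `i → j → k → i` carrying an edge of
weight `> 4`. If `p = w(i,j)` is the least of its weights `p, q, r`, then `qr > 4p`, and the
mutation at `k` keeps the triangle oriented and replaces `p` by `qr - 2√(pqr) + p > p`.
Iterating, the weights in the mutation class are unbounded.
-/

section Mutation

variable {n : ℕ} {M : Matrix (Fin n) (Fin n) ℤ} {i j k : Fin n}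

lemma two_dvd_abs_mul_add_mul_abs (x y : ℤ) : 2 ∣ |x| * y + x * |y| :=
  (by simp [Int.even_add, Int.even_mul, even_abs] : Even (|x| * y + x * |y|)).two_dvd

lemma mutate_apply_of_ne (hi : i ≠ k) (hj : j ≠ k) :
    mutate M k i j = M i j + (|M i k| * M k j + M i k * |M k j|) / 2 := by
  simp [mutate, hi, hj]

lemma mutate_apply_left : mutate M k k j = -M k j := by
  simp [mutate]

lemma mutate_apply_right : mutate M k i k = -M i k := by
  simp [mutate]

lemma mutate_apply_of_pos_of_pos (hi : i ≠ k) (hj : j ≠ k) (hik : 0 < M i k) (hkj : 0 < M k j) :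
    mutate M k i j = M i j + M i k * M k j := by
  rw [mutate_apply_of_ne hi hj, abs_of_pos hik, abs_of_pos hkj, ← two_mul,
    Int.mul_ediv_cancel_left _ two_ne_zero]

lemma mutate_apply_of_neg_of_neg (hi : i ≠ k) (hj : j ≠ k) (hik : M i k < 0) (hkj : M k j < 0) :
    mutate M k i j = M i j - M i k * M k j := by
  rw [mutate_apply_of_ne hi hj, abs_of_neg hik, abs_of_neg hkj,
    show -M i k * M k j + M i k * -M k j = 2 * -(M i k * M k j) by ring,
    Int.mul_ediv_cancel_left _ two_ne_zero, sub_eq_add_neg]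

lemma mutate_apply_of_left_eq_zero (hi : i ≠ k) (hj : j ≠ k) (hik : M i k = 0) :
    mutate M k i j = M i j := by
  simp [mutate_apply_of_ne hi hj, hik]

lemma mutate_neg (M : Matrix (Fin n) (Fin n) ℤ) (k : Fin n) : mutate (-M) k = -mutate M k := by
  ext i j
  simp only [mutate, of_apply, neg_apply, abs_neg]
  split_ifs
  · rfl
  · rw [show |M i k| * -M k j + -M i k * |M k j| = -(|M i k| * M k j + M i k * |M k j|) by ring,
      Int.neg_ediv_of_dvd (two_dvd_abs_mul_add_mul_abs _ _), neg_add]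

end Mutation

section MutationClass

variable {n : ℕ} {B M M' : Matrix (Fin n) (Fin n) ℤ}

lemma self_mem_mutationClass (B : Matrix (Fin n) (Fin n) ℤ) : B ∈ mutationClass B :=
  ⟨[], rfl⟩

lemma mutate_mem_mutationClass (M : Matrix (Fin n) (Fin n) ℤ) (k : Fin n) :
    mutate M k ∈ mutationClass M :=
  ⟨[k], rfl⟩

lemma mutationClass_trans (hM : M ∈ mutationClass B) (hM' : M' ∈ mutationClass M) :
    M' ∈ mutationClass B := by
  obtain ⟨l, rfl⟩ := hM
  obtain ⟨l', rfl⟩ := hM'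
  exact ⟨l ++ l', by simp⟩

lemma mutationClass_induction {P : Matrix (Fin n) (Fin n) ℤ → Prop} (hB : P B)
    (hmut : ∀ M k, P M → P (mutate M k)) (hM : M ∈ mutationClass B) : P M := by
  obtain ⟨l, rfl⟩ := hM
  induction l generalizing B with
  | nil => exact hB
  | cons k l ih => exact ih (hmut B k hB)

lemma neg_mem_mutationClass_neg (hM : M ∈ mutationClass B) : -M ∈ mutationClass (-B) :=
  mutationClass_induction (P := fun M => -M ∈ mutationClass (-B)) (self_mem_mutationClass _)
    (fun M k hM => mutate_neg M k ▸ mutationClass_trans hM (mutate_mem_mutationClass _ k)) hM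

end MutationClass

lemma finite_setOf_abs_apply_le {m n : Type*} [Finite m] [Finite n] (C : ℤ) :
    {M : Matrix m n ℤ | ∀ i j, |M i j| ≤ C}.Finite :=
  (Set.Finite.pi fun _ => Set.Finite.pi fun _ => Set.finite_Icc (-C) C).subset
    fun _ hM i _ j _ => abs_le.mp (hM i j)

def edgeWeight {n : ℕ} (M : Matrix (Fin n) (Fin n) ℤ) (i j : Fin n) : ℤ := |M i j * M j i|

section EdgeWeight

variable {n : ℕ} {M : Matrix (Fin n) (Fin n) ℤ} {i j k : Fin n}

lemma edgeWeight_comm : edgeWeight M i j = edgeWeight M j i := by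
  rw [edgeWeight, edgeWeight, mul_comm]

lemma edgeWeight_neg : edgeWeight (-M) i j = edgeWeight M i j := by
  simp [edgeWeight]

lemma edgeWeight_mutate_left : edgeWeight (mutate M k) k j = edgeWeight M k j := by
  rw [edgeWeight, edgeWeight, mutate_apply_left, mutate_apply_right, neg_mul_neg]

lemma edgeWeight_mutate_right : edgeWeight (mutate M k) i k = edgeWeight M i k := by
  rw [edgeWeight, edgeWeight, mutate_apply_left, mutate_apply_right, neg_mul_neg]

lemma Set.Finite.exists_edgeWeight_le {S : Set (Matrix (Fin n) (Fin n) ℤ)} (hS : S.Finite) :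
    ∃ C, ∀ M ∈ S, ∀ i j, edgeWeight M i j ≤ C := by
  obtain ⟨C, hC⟩ := ((hS.prod Set.finite_univ).image
    fun p : Matrix (Fin n) (Fin n) ℤ × (Fin n × Fin n) => edgeWeight p.1 p.2.1 p.2.2).bddAbove
  exact ⟨C, fun M hM i j => hC ⟨(M, i, j), ⟨hM, trivial⟩, rfl⟩⟩

end EdgeWeight

namespace IsSkewSymmetrizable

variable {n : ℕ} {B M : Matrix (Fin n) (Fin n) ℤ} {i j k : Fin n}

lemma apply_self (hM : IsSkewSymmetrizable M) (i : Fin n) : M i i = 0 := by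
  obtain ⟨d, hd, hs⟩ := hM
  have : M i i * d i = 0 := by linarith [hs i i]
  exact (mul_eq_zero.mp this).resolve_right (hd i).ne'

lemma ne_of_apply_ne_zero (hM : IsSkewSymmetrizable M) (h : M i j ≠ 0) : i ≠ j := by
  rintro rfl
  exact h (hM.apply_self i)

lemma apply_eq_zero (hM : IsSkewSymmetrizable M) (h : M i j = 0) : M j i = 0 := by
  obtain ⟨d, hd, hs⟩ := hM
  have : M j i * d i = 0 := by linarith [hs i j, h ▸ zero_mul (d j)]
  exact (mul_eq_zero.mp this).resolve_right (hd i).ne'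

lemma apply_ne_zero (hM : IsSkewSymmetrizable M) (h : M i j ≠ 0) : M j i ≠ 0 :=
  fun h' => h (hM.apply_eq_zero h')

lemma apply_neg_of_pos (hM : IsSkewSymmetrizable M) (h : 0 < M i j) : M j i < 0 := by
  obtain ⟨d, hd, hs⟩ := hM
  exact neg_of_mul_neg_left (by linarith [hs i j, mul_pos h (hd j)]) (hd i).le

lemma apply_pos_of_neg (hM : IsSkewSymmetrizable M) (h : M i j < 0) : 0 < M j i := by
  obtain ⟨d, hd, hs⟩ := hM
  exact pos_of_mul_pos_left (by linarith [hs i j, mul_neg_of_neg_of_pos h (hd j)]) (hd i).le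

lemma apply_nonneg_of_nonpos (hM : IsSkewSymmetrizable M) (h : M i j ≤ 0) : 0 ≤ M j i :=
  le_of_not_gt fun h' => h.not_gt (hM.apply_pos_of_neg h')

lemma apply_nonpos_of_nonneg (hM : IsSkewSymmetrizable M) (h : 0 ≤ M i j) : M j i ≤ 0 :=
  le_of_not_gt fun h' => h.not_gt (hM.apply_neg_of_pos h')

lemma mul_apply_nonpos (hM : IsSkewSymmetrizable M) (i j : Fin n) : M i j * M j i ≤ 0 := by
  rcases lt_trichotomy (M i j) 0 with h | h | h
  · exact mul_nonpos_of_nonpos_of_nonneg h.le (hM.apply_pos_of_neg h).le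
  · rw [h, zero_mul]
  · exact mul_nonpos_of_nonneg_of_nonpos h.le (hM.apply_neg_of_pos h).le

lemma edgeWeight_eq (hM : IsSkewSymmetrizable M) (i j : Fin n) :
    edgeWeight M i j = -(M i j * M j i) :=
  abs_of_nonpos (hM.mul_apply_nonpos i j)

lemma abs_apply_le_edgeWeight (hM : IsSkewSymmetrizable M) (i j : Fin n) :
    |M i j| ≤ edgeWeight M i j := by
  rw [edgeWeight, abs_mul]
  by_cases h : M j i = 0
  · rw [hM.apply_eq_zero h, abs_zero, zero_mul]
  · exact le_mul_of_one_le_right (abs_nonneg _) (Int.one_le_abs h)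

lemma one_le_edgeWeight (hM : IsSkewSymmetrizable M) (h : M i j ≠ 0) : 1 ≤ edgeWeight M i j :=
  (Int.one_le_abs h).trans (hM.abs_apply_le_edgeWeight i j)

/-- Multiplying out the relations `b_ij d_j = -b_ji d_i` around the triangle cancels `d`. -/
lemma cycle (hM : IsSkewSymmetrizable M) (i j k : Fin n) :
    M i j * M j k * M k i = -(M j i * M k j * M i k) := by
  obtain ⟨d, hd, hs⟩ := hM
  have hD : d i * d j * d k ≠ 0 := by have := hd i; have := hd j; have := hd k; positivity
  refine mul_right_cancel₀ hD ?_
  linear_combination (M j k * d k) * (M k i * d i) * hs i j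
    - (M j i * d i) * (M k i * d i) * hs j k + (M j i * d i) * (M k j * d j) * hs k i

lemma neg (hM : IsSkewSymmetrizable M) : IsSkewSymmetrizable (-M) := by
  obtain ⟨d, hd, hs⟩ := hM
  exact ⟨d, hd, fun i j => by simp [hs i j]⟩

/-- The numerators of the two mutation terms satisfy the skew relation exactly and are even. -/
lemma mutate (hM : IsSkewSymmetrizable M) (k : Fin n) : IsSkewSymmetrizable (mutate M k) := by
  obtain ⟨d, hd, hs⟩ := hM
  have habs : ∀ i j, |M i j| * d j = |M j i| * d i := fun i j => by
    rw [← abs_of_pos (hd j), ← abs_mul, hs, abs_neg, abs_mul, abs_of_pos (hd i)]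
  refine ⟨d, hd, fun i j => ?_⟩
  by_cases h : i = k ∨ j = k
  · simp only [_root_.mutate, of_apply, if_pos h, if_pos h.symm]
    linear_combination -hs i j
  obtain ⟨hik, hjk⟩ := not_or.mp h
  rw [mutate_apply_of_ne hik hjk, mutate_apply_of_ne hjk hik]
  obtain ⟨a, ha⟩ := two_dvd_abs_mul_add_mul_abs (M i k) (M k j)
  obtain ⟨b, hb⟩ := two_dvd_abs_mul_add_mul_abs (M j k) (M k i)
  have key : (|M i k| * M k j + M i k * |M k j|) * d j
      = -((|M j k| * M k i + M j k * |M k i|) * d i) := by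
    linear_combination |M i k| * hs k j - M j k * habs i k + M i k * habs k j + |M j k| * hs i k
  rw [ha, hb] at key
  rw [ha, hb, Int.mul_ediv_cancel_left _ two_ne_zero, Int.mul_ediv_cancel_left _ two_ne_zero]
  linarith [hs i j]

lemma of_mem_mutationClass (hB : IsSkewSymmetrizable B) {M : Matrix (Fin n) (Fin n) ℤ}
    (hM : M ∈ mutationClass B) : IsSkewSymmetrizable M :=
  mutationClass_induction hB (fun _ k h => h.mutate k) hM

end IsSkewSymmetrizable

section Diagram

def diagram {n : ℕ} (M : Matrix (Fin n) (Fin n) ℤ) : SimpleGraph (Fin n) :=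
  SimpleGraph.fromRel fun i j => M i j ≠ 0

variable {n : ℕ} {B M : Matrix (Fin n) (Fin n) ℤ} {i j k : Fin n}

lemma diagram_adj_of_ne (hij : i ≠ j) (h : M i j ≠ 0) : (diagram M).Adj i j :=
  SimpleGraph.fromRel_adj _ i j |>.mpr ⟨hij, Or.inl h⟩

lemma IsSkewSymmetrizable.diagram_adj_iff (hM : IsSkewSymmetrizable M) :
    (diagram M).Adj i j ↔ i ≠ j ∧ M i j ≠ 0 := by
  rw [diagram, SimpleGraph.fromRel_adj, or_iff_left_of_imp fun h h' => h (hM.apply_eq_zero h')]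

/-- An edge `i - j` destroyed by the mutation at `k` is replaced by the path `i - k - j`. -/
lemma reachable_diagram_mutate (k : Fin n) (h : M i j ≠ 0) :
    (diagram (mutate M k)).Reachable i j := by
  by_cases hij : i = j
  · exact hij ▸ SimpleGraph.Reachable.refl i
  by_cases hk : i = k ∨ j = k
  · exact (diagram_adj_of_ne hij (by simpa [mutate, hk] using h)).reachable
  obtain ⟨hik, hjk⟩ := not_or.mp hk
  by_cases h' : mutate M k i j = 0
  · rw [mutate_apply_of_ne hik hjk] at h'
    have hik' : M i k ≠ 0 := fun h0 => h (by simpa [h0] using h')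
    have hkj' : M k j ≠ 0 := fun h0 => h (by simpa [h0] using h')
    exact (diagram_adj_of_ne hik (by rwa [mutate_apply_right, neg_ne_zero])).reachable.trans
      (diagram_adj_of_ne (Ne.symm hjk) (by rwa [mutate_apply_left, neg_ne_zero])).reachable
  · exact (diagram_adj_of_ne hij h').reachable

lemma connected_diagram_mutate (h : (diagram M).Connected) (k : Fin n) :
    (diagram (mutate M k)).Connected := by
  have := h.nonempty
  refine ⟨fun a b => ?_⟩
  obtain ⟨w⟩ := h.preconnected a b
  induction w with
  | nil => rfl
  | cons hadj _ ih =>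
    refine .trans ?_ ih
    rcases ((SimpleGraph.fromRel_adj _ _ _).mp hadj).2 with h' | h'
    · exact reachable_diagram_mutate k h'
    · exact (reachable_diagram_mutate k h').symm

lemma connected_diagram_of_mem_mutationClass (hB : (diagram B).Connected)
    (hM : M ∈ mutationClass B) : (diagram M).Connected :=
  mutationClass_induction hB (fun _ k h => connected_diagram_mutate h k) hM

end Diagram

lemma SimpleGraph.Connected.exists_adj_of_two_lt_card {V : Type*} [Fintype V] {G : SimpleGraph V}
    (hG : G.Connected) (hV : 2 < Fintype.card V) (i j : V) :
    ∃ k, k ≠ i ∧ k ≠ j ∧ (G.Adj i k ∨ G.Adj j k) := by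
  classical
  obtain ⟨m, -, hm⟩ := Finset.exists_mem_notMem_of_card_lt_card
    (s := {i, j}) (t := Finset.univ) ((Finset.card_le_two).trans_lt hV)
  obtain ⟨w⟩ := hG.preconnected i m
  obtain ⟨d, -, hd, hd'⟩ := w.exists_boundary_dart {i, j} (by simp) (by simpa using hm)
  simp only [Set.mem_insert_iff, Set.mem_singleton_iff, not_or] at hd hd'
  refine ⟨d.snd, hd'.1, hd'.2, ?_⟩
  rcases hd with h | h
  · exact Or.inl (h ▸ d.adj)
  · exact Or.inr (h ▸ d.adj)

lemma four_mul_lt_mul_of_le_of_le {p q r : ℤ} (hp : 1 ≤ p) (hpq : p ≤ q) (hpr : p ≤ r)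
    (h : 4 < p ∨ 4 < q ∨ 4 < r) : 4 * p < q * r := by
  rcases h with h | h | h <;> nlinarith

lemma two_mul_lt_of_mul_eq_of_four_mul_lt {a b x y : ℤ} (ha : 0 < a) (hb : 0 < b) (hy : 0 < y)
    (hxy : a * x = b * y) (h : 4 * (a * b) < x * y) : 2 * a < y := by
  have : (2 * a) ^ 2 < y ^ 2 := by nlinarith [mul_lt_mul_of_pos_left h ha]
  exact lt_of_pow_lt_pow_left₀ 2 hy.le this

section HeavyCycle

variable {n : ℕ} {B M : Matrix (Fin n) (Fin n) ℤ} {i j k : Fin n}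

/-- An oriented triangle `i → j → k → i` with an edge of weight `> 4`. -/
def IsHeavyCycle (M : Matrix (Fin n) (Fin n) ℤ) (i j k : Fin n) : Prop :=
  0 < M i j ∧ 0 < M j k ∧ 0 < M k i ∧
    (4 < edgeWeight M i j ∨ 4 < edgeWeight M j k ∨ 4 < edgeWeight M k i)

def cycleWeight (M : Matrix (Fin n) (Fin n) ℤ) (i j k : Fin n) : ℤ :=
  edgeWeight M i j + edgeWeight M j k + edgeWeight M k i

lemma cycleWeight_nonneg : 0 ≤ cycleWeight M i j k := by
  unfold cycleWeight edgeWeight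
  positivity

lemma IsHeavyCycle.neg (hM : IsSkewSymmetrizable M) (h : IsHeavyCycle M i j k) :
    IsHeavyCycle (-M) k j i := by
  obtain ⟨hij, hjk, hki, hw⟩ := h
  simp only [IsHeavyCycle, neg_apply, neg_pos, edgeWeight_neg]
  refine ⟨hM.apply_neg_of_pos hjk, hM.apply_neg_of_pos hij, hM.apply_neg_of_pos hki, ?_⟩
  rw [edgeWeight_comm (i := k) (j := j), edgeWeight_comm (i := j) (j := i),
    edgeWeight_comm (i := i) (j := k)]
  tauto

lemma IsHeavyCycle.rotate (h : IsHeavyCycle M i j k) : IsHeavyCycle M j k i :=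
  ⟨h.2.1, h.2.2.1, h.1, by have := h.2.2.2; tauto⟩

lemma IsHeavyCycle.exists_rotation_min (h : IsHeavyCycle M i j k) :
    ∃ a b c, IsHeavyCycle M a b c ∧ cycleWeight M a b c = cycleWeight M i j k ∧
      edgeWeight M a b ≤ edgeWeight M b c ∧ edgeWeight M a b ≤ edgeWeight M c a := by
  unfold cycleWeight
  rcases le_total (edgeWeight M i j) (edgeWeight M j k) with h12 | h12 <;>
  rcases le_total (edgeWeight M j k) (edgeWeight M k i) with h23 | h23 <;>
  rcases le_total (edgeWeight M k i) (edgeWeight M i j) with h31 | h31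
  all_goals first
    | exact ⟨i, j, k, h, rfl, by omega, by omega⟩
    | exact ⟨j, k, i, h.rotate, by ring, by omega, by omega⟩
    | exact ⟨k, i, j, h.rotate.rotate, by ring, by omega, by omega⟩

lemma isHeavyCycle_mutate_of_path {a b c : Fin n}
    (hM : IsSkewSymmetrizable M) (hab : 0 < M a b) (hbc : 0 < M b c) (hac : 0 ≤ M a c)
    (hw : 4 < edgeWeight M a b ∨ 4 < edgeWeight M b c ∨ 4 < edgeWeight M a c) :
    IsHeavyCycle (mutate M b) a c b := by
  have hba := hM.apply_neg_of_pos hab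
  have hcb := hM.apply_neg_of_pos hbc
  have hca := hM.apply_nonpos_of_nonneg hac
  have hab' := hM.ne_of_apply_ne_zero hab.ne'
  have hcb' := (hM.ne_of_apply_ne_zero hbc.ne').symm
  have e_ac : mutate M b a c = M a c + M a b * M b c :=
    mutate_apply_of_pos_of_pos hab' hcb' hab hbc
  have e_ca : mutate M b c a = M c a - M c b * M b a :=
    mutate_apply_of_neg_of_neg hcb' hab' hcb hba
  have hle : edgeWeight M a c ≤ edgeWeight (mutate M b) a c := by
    rw [hM.edgeWeight_eq, (hM.mutate b).edgeWeight_eq, e_ac, e_ca]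
    nlinarith [mul_pos hab hbc, mul_pos_of_neg_of_neg hcb hba]
  refine ⟨by rw [e_ac]; positivity, by rw [mutate_apply_right]; linarith,
    by rw [mutate_apply_left]; linarith, ?_⟩
  have hba' : edgeWeight (mutate M b) b a = edgeWeight M a b :=
    edgeWeight_mutate_left.trans edgeWeight_comm
  have hcb' : edgeWeight (mutate M b) c b = edgeWeight M b c :=
    edgeWeight_mutate_right.trans edgeWeight_comm
  omega

lemma isHeavyCycle_mutate_of_min (hM : IsSkewSymmetrizable M)
    (h : IsHeavyCycle M i j k) (hj : edgeWeight M i j ≤ edgeWeight M j k)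
    (hk : edgeWeight M i j ≤ edgeWeight M k i) :
    IsHeavyCycle (mutate M k) i k j ∧ cycleWeight M i j k < cycleWeight (mutate M k) i k j := by
  obtain ⟨hij, hjk, hki, hw⟩ := h
  have hji := hM.apply_neg_of_pos hij
  have hkj := hM.apply_neg_of_pos hjk
  have hik := hM.apply_neg_of_pos hki
  have hik' := (hM.ne_of_apply_ne_zero hki.ne').symm
  have hjk' := hM.ne_of_apply_ne_zero hjk.ne'
  have e_ji : mutate M k j i = M j i + M j k * M k i :=
    mutate_apply_of_pos_of_pos hjk' hik' hjk hki
  have e_ij : mutate M k i j = M i j - M i k * M k j :=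
    mutate_apply_of_neg_of_neg hik' hjk' hik hkj
  have hcyc := hM.cycle i j k
  have h4 : 4 * (M i j * -M j i) < M j k * M k i * (M i k * M k j) := by
    have := four_mul_lt_mul_of_le_of_le (hM.one_le_edgeWeight hij.ne') hj hk hw
    rw [hM.edgeWeight_eq, hM.edgeWeight_eq, hM.edgeWeight_eq] at this
    linarith
  have hy := two_mul_lt_of_mul_eq_of_four_mul_lt hij (neg_pos.mpr hji)
    (mul_pos_of_neg_of_neg hik hkj) (by linarith) h4
  have hx := two_mul_lt_of_mul_eq_of_four_mul_lt (x := M i k * M k j) (neg_pos.mpr hji) hij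
    (mul_pos hjk hki) (by linarith) (by linarith)
  have hgrow : edgeWeight M i j < edgeWeight (mutate M k) j i := by
    rw [hM.edgeWeight_eq, (hM.mutate k).edgeWeight_eq, e_ji, e_ij]
    nlinarith [mul_pos (mul_pos hjk hki) (sub_pos.mpr hy)]
  have hr : edgeWeight (mutate M k) i k = edgeWeight M k i :=
    edgeWeight_mutate_right.trans edgeWeight_comm
  have hq : edgeWeight (mutate M k) k j = edgeWeight M j k :=
    edgeWeight_mutate_left.trans edgeWeight_comm
  refine ⟨⟨by rw [mutate_apply_right]; linarith, by rw [mutate_apply_left]; linarith,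
    by rw [e_ji]; linarith, by omega⟩, ?_⟩
  unfold cycleWeight
  omega

lemma exists_isHeavyCycle_of_path {a b c : Fin n} (hM : IsSkewSymmetrizable M)
    (hab : 0 < M a b) (hbc : 0 < M b c)
    (hw : 4 < edgeWeight M a b ∨ 4 < edgeWeight M b c ∨ 4 < edgeWeight M a c) :
    ∃ M' ∈ mutationClass M, ∃ i j k, IsHeavyCycle M' i j k := by
  by_cases hca : 0 < M c a
  · exact ⟨M, self_mem_mutationClass M, a, b, c, hab, hbc, hca,
      by rwa [edgeWeight_comm (i := c)]⟩
  · exact ⟨mutate M b, mutate_mem_mutationClass M b, a, c, b,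
      isHeavyCycle_mutate_of_path hM hab hbc (hM.apply_nonneg_of_nonpos (not_lt.mp hca)) hw⟩

lemma exists_isHeavyCycle_of_pos (hM : IsSkewSymmetrizable M) (hij : 0 < M i j)
    (hw : 4 < edgeWeight M i j) (hki : k ≠ i) (hjk : M j k ≠ 0) :
    ∃ M' ∈ mutationClass M, ∃ a b c, IsHeavyCycle M' a b c := by
  rcases hjk.lt_or_gt with hjk | hjk
  · have hkj := hM.apply_pos_of_neg hjk
    rcases lt_trichotomy (M i k) 0 with hik | hik | hik
    · exact exists_isHeavyCycle_of_path hM (hM.apply_pos_of_neg hik) hij (Or.inr (Or.inl hw))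
    · -- `j` is a sink with no edge `i - k`: mutating at `i` gives the path `k → j → i`.
      have hkj' : mutate M i k j = M k j :=
        mutate_apply_of_left_eq_zero hki (hM.ne_of_apply_ne_zero hij.ne').symm
          (hM.apply_eq_zero hik)
      obtain ⟨M', hM', h⟩ := exists_isHeavyCycle_of_path (hM.mutate i) (b := j)
        (hkj' ▸ hkj) (by rw [mutate_apply_right]; linarith [hM.apply_neg_of_pos hij])
        (Or.inr (Or.inl (by rwa [edgeWeight_mutate_right, edgeWeight_comm])))
      exact ⟨M', mutationClass_trans (mutate_mem_mutationClass M i) hM', h⟩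
    · exact exists_isHeavyCycle_of_path hM hik hkj (Or.inr (Or.inr hw))
  · exact exists_isHeavyCycle_of_path hM hij hjk (Or.inl hw)

lemma exists_isHeavyCycle_of_ne_zero (hM : IsSkewSymmetrizable M) (hij : M i j ≠ 0)
    (hw : 4 < edgeWeight M i j) (hki : k ≠ i) (hjk : M j k ≠ 0) :
    ∃ M' ∈ mutationClass M, ∃ a b c, IsHeavyCycle M' a b c := by
  rcases hij.lt_or_gt with hij | hij
  · obtain ⟨M', hM', a, b, c, h⟩ := exists_isHeavyCycle_of_pos hM.neg (neg_pos.mpr hij)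
      (by rwa [edgeWeight_neg]) hki (by simpa using hjk)
    exact ⟨-M', by simpa using neg_mem_mutationClass_neg hM', c, b, a,
      by simpa using h.neg (hM.neg.of_mem_mutationClass hM')⟩
  · exact exists_isHeavyCycle_of_pos hM hij hw hki hjk

lemma exists_isHeavyCycle (hM : IsSkewSymmetrizable M) (hw : 4 < edgeWeight M i j)
    (hki : k ≠ i) (hkj : k ≠ j) (hk : M i k ≠ 0 ∨ M j k ≠ 0) :
    ∃ M' ∈ mutationClass M, ∃ a b c, IsHeavyCycle M' a b c := by
  have hij : M i j ≠ 0 := by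
    rintro h
    simp [edgeWeight, h] at hw
  rcases hk with hk | hk
  · exact exists_isHeavyCycle_of_ne_zero hM (hM.apply_ne_zero hij)
      (by rwa [edgeWeight_comm]) hkj hk
  · exact exists_isHeavyCycle_of_ne_zero hM hij hw hki hk

lemma exists_isHeavyCycle_le_cycleWeight (hB : IsSkewSymmetrizable B)
    (h : ∃ M ∈ mutationClass B, ∃ i j k, IsHeavyCycle M i j k) (N : ℕ) :
    ∃ M ∈ mutationClass B, ∃ i j k, IsHeavyCycle M i j k ∧ N ≤ cycleWeight M i j k := by
  induction N with
  | zero =>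
    obtain ⟨M, hM, i, j, k, h⟩ := h
    exact ⟨M, hM, i, j, k, h, cycleWeight_nonneg⟩
  | succ N ih =>
    obtain ⟨M, hM, i, j, k, h, hN⟩ := ih
    have hM' := hB.of_mem_mutationClass hM
    obtain ⟨a, b, c, h, hrot, hab, hca⟩ := h.exists_rotation_min
    obtain ⟨h', hlt⟩ := isHeavyCycle_mutate_of_min hM' h hab hca
    exact ⟨mutate M c, mutationClass_trans hM (mutate_mem_mutationClass M c), a, c, b, h',
      by push_cast; omega⟩

lemma mutationClass_infinite (hB : IsSkewSymmetrizable B)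
    (h : ∃ M ∈ mutationClass B, ∃ i j k, IsHeavyCycle M i j k) :
    (mutationClass B).Infinite := by
  intro hfin
  obtain ⟨C, hC⟩ := hfin.exists_edgeWeight_le
  obtain ⟨M, hM, i, j, k, -, hle⟩ := exists_isHeavyCycle_le_cycleWeight hB h (3 * C + 1).toNat
  have := Int.self_le_toNat (3 * C + 1)
  have := hC M hM i j
  have := hC M hM j k
  have := hC M hM k i
  unfold cycleWeight at hle
  omega

end HeavyCycle

/-- A connected skew-symmetrizable matrix of order at least `3` is mutation-finite iff no
matrix in its mutation class has an entry pair of weight `|b'_ij * b'_ji|` greater than `4`. -/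
theorem mutationFinite_iff_weights_le_four {n : ℕ} (hn : 3 ≤ n)
    (B : Matrix (Fin n) (Fin n) ℤ) (hB : IsSkewSymmetrizable B)
    (hconn : (SimpleGraph.fromRel (fun i j => B i j ≠ 0)).Connected) :
    (mutationClass B).Finite ↔
      ∀ B' ∈ mutationClass B, ∀ i j, |B' i j * B' j i| ≤ 4 := by
  constructor
  · intro hfin
    by_contra! ⟨B', hB', i, j, hw⟩
    have hB'skew := hB.of_mem_mutationClass hB'
    have hadj {a b} (h : (diagram B').Adj a b) : B' a b ≠ 0 := (hB'skew.diagram_adj_iff.mp h).2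
    have hconn' := connected_diagram_of_mem_mutationClass hconn hB'
    obtain ⟨k, hki, hkj, hk⟩ :=
      hconn'.exists_adj_of_two_lt_card (by rw [Fintype.card_fin]; omega) i j
    obtain ⟨M, hM, h⟩ := exists_isHeavyCycle hB'skew hw hki hkj (hk.imp hadj hadj)
    exact mutationClass_infinite hB ⟨M, mutationClass_trans hB' hM, h⟩ hfin
  · intro h
    exact (finite_setOf_abs_apply_le 4).subset fun M hM i j =>
      ((hB.of_mem_mutationClass hM).abs_apply_le_edgeWeight i j).trans (h M hM i j)
end

section
/- Let B be a 3×3 skew-symmetrizable integer matrix whose diagram is connected and such that |b_ij · b_ji| ≥ 5 for some pair of indices i ≠ j. Then the mutation class of B is infinite. -/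
open Matrix

namespace MutAux
lemma tval_pp {x y : ℤ} (hx : 0 ≤ x) (hy : 0 ≤ y) : (|x| * y + x * |y|) / 2 = x * y := by
  rw [abs_of_nonneg hx, abs_of_nonneg hy, ← two_mul (x*y)]
  exact Int.mul_ediv_cancel_left _ two_ne_zero
lemma tval_nn {x y : ℤ} (hx : x ≤ 0) (hy : y ≤ 0) : (|x| * y + x * |y|) / 2 = -(x * y) := by
  rw [abs_of_nonpos hx, abs_of_nonpos hy, show -x * y + x * -y = 2 * (-(x*y)) by ring]
  exact Int.mul_ediv_cancel_left _ two_ne_zero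
lemma tval_pn {x y : ℤ} (hx : 0 ≤ x) (hy : y ≤ 0) : (|x| * y + x * |y|) / 2 = 0 := by
  rw [abs_of_nonneg hx, abs_of_nonpos hy, show x * y + x * -y = 0 by ring]; rfl
lemma tval_np {x y : ℤ} (hx : x ≤ 0) (hy : 0 ≤ y) : (|x| * y + x * |y|) / 2 = 0 := by
  rw [abs_of_nonpos hx, abs_of_nonneg hy, show -x * y + x * y = 0 by ring]; rfl
lemma two_tval (x y : ℤ) : 2 * ((|x| * y + x * |y|) / 2) = |x| * y + x * |y| := by
  rcases le_total 0 x with hx | hx <;> rcases le_total 0 y with hy | hy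
  · rw [tval_pp hx hy, abs_of_nonneg hx, abs_of_nonneg hy]; ring
  · rw [tval_pn hx hy, abs_of_nonneg hx, abs_of_nonpos hy]; ring
  · rw [tval_np hx hy, abs_of_nonpos hx, abs_of_nonneg hy]; ring
  · rw [tval_nn hx hy, abs_of_nonpos hx, abs_of_nonpos hy]; ring
lemma mutate_app {n : ℕ} (B : Matrix (Fin n) (Fin n) ℤ) (k i j : Fin n) :
    mutate B k i j = if i = k ∨ j = k then -B i j
      else B i j + (|B i k| * B k j + B i k * |B k j|) / 2 := rfl
lemma mutate_neg {n : ℕ} (B : Matrix (Fin n) (Fin n) ℤ) {k i j : Fin n} (h : i = k ∨ j = k) :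
    mutate B k i j = -B i j := by rw [mutate_app, if_pos h]
lemma mutate_ne {n : ℕ} (B : Matrix (Fin n) (Fin n) ℤ) {k i j : Fin n}
    (hi : i ≠ k) (hj : j ≠ k) :
    mutate B k i j = B i j + (|B i k| * B k j + B i k * |B k j|) / 2 := by
  rw [mutate_app, if_neg (by tauto)]

-- sign lemmas
variable {n : ℕ} {B : Matrix (Fin n) (Fin n) ℤ}

lemma skew_pos_neg (hB : IsSkewSymmetrizable B) {i j : Fin n} (h : 0 < B i j) : B j i < 0 := by
  obtain ⟨d, hd, hs⟩ := hB
  have h1 : 0 < B i j * d j := mul_pos h (hd j)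
  have h2 : B j i * d i < 0 := by linarith [hs i j]
  nlinarith [hd i]

lemma skew_neg_pos (hB : IsSkewSymmetrizable B) {i j : Fin n} (h : B i j < 0) : 0 < B j i := by
  obtain ⟨d, hd, hs⟩ := hB
  have h1 : B i j * d j < 0 := mul_neg_of_neg_of_pos h (hd j)
  have h2 : 0 < B j i * d i := by linarith [hs i j]
  nlinarith [hd i]

lemma skew_zero (hB : IsSkewSymmetrizable B) {i j : Fin n} (h : B i j = 0) : B j i = 0 := by
  obtain ⟨d, hd, hs⟩ := hB
  have := hs i j
  rw [h, zero_mul] at this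
  have := (neg_eq_zero.mp this.symm)
  exact (mul_eq_zero.mp this).resolve_right (hd i).ne'

lemma skew_ne (hB : IsSkewSymmetrizable B) {i j : Fin n} (h : B i j ≠ 0) : B j i ≠ 0 :=
  fun h0 => h (skew_zero hB h0)

lemma skew_mutate (hB : IsSkewSymmetrizable B) (k : Fin n) :
    IsSkewSymmetrizable (mutate B k) := by
  obtain ⟨d, hd, hs⟩ := hB
  refine ⟨d, hd, fun i j => ?_⟩
  by_cases hik : i = k
  · rw [mutate_neg _ (Or.inl hik), mutate_neg _ (Or.inr hik)]
    linarith [hs i j]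
  · by_cases hjk : j = k
    · rw [mutate_neg _ (Or.inr hjk), mutate_neg _ (Or.inl hjk)]
      linarith [hs i j]
    · rw [mutate_ne _ hik hjk, mutate_ne _ hjk hik]
      have habs1 : |B k j| * d j = |B j k| * d k := by
        have := congrArg abs (hs k j)
        rwa [abs_neg, abs_mul, abs_mul, abs_of_pos (hd j), abs_of_pos (hd k)] at this
      have habs2 : |B i k| * d k = |B k i| * d i := by
        have := congrArg abs (hs i k)
        rwa [abs_neg, abs_mul, abs_mul, abs_of_pos (hd k), abs_of_pos (hd i)] at this
      have et1 := two_tval (B i k) (B k j)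
      have et2 := two_tval (B j k) (B k i)
      have key2 : (|B i k| * B k j + B i k * |B k j|) * d j
          = -((|B j k| * B k i + B j k * |B k i|) * d i) := by
        linear_combination |B i k| * hs k j - B j k * habs2 + B i k * habs1 + |B j k| * hs i k
      have goal2 : 2 * ((B i j + (|B i k| * B k j + B i k * |B k j|) / 2) * d j)
          = 2 * (-((B j i + (|B j k| * B k i + B j k * |B k i|) / 2) * d i)) := by
        linear_combination 2 * hs i j + d j * et1 + d i * et2 + key2
      linarith [goal2]

lemma skew_cycle (hB : IsSkewSymmetrizable B) (u v w : Fin n) :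
    B u v * B v w * B w u = -(B v u * B w v * B u w) := by
  obtain ⟨d, hd, hs⟩ := hB
  have h : (B u v * d v) * ((B v w * d w) * (B w u * d u))
      = (-(B v u * d u)) * ((-(B w v * d v)) * (-(B u w * d w))) := by
    rw [hs u v, hs v w, hs w u]
  have hD : (0:ℤ) < d u * d v * d w := mul_pos (mul_pos (hd u) (hd v)) (hd w)
  exact mul_right_cancel₀ hD.ne' (by linear_combination h)


-- 3x3 layer
abbrev M3 := Matrix (Fin 3) (Fin 3) ℤ

def wgt (B : M3) (i j : Fin 3) : ℤ := |B i j * B j i|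

def f3 (B : M3) : ℤ := wgt B 0 1 + wgt B 0 2 + wgt B 1 2

def Q3 (B : M3) : Prop :=
  IsSkewSymmetrizable B ∧ (∀ i j : Fin 3, i ≠ j → B i j ≠ 0) ∧
    (∃ i j : Fin 3, i ≠ j ∧ 5 ≤ wgt B i j)

lemma wgt_comm (B : M3) (i j : Fin 3) : wgt B i j = wgt B j i := by
  unfold wgt; rw [mul_comm]

lemma wgt_nonneg (B : M3) (i j : Fin 3) : 0 ≤ wgt B i j := abs_nonneg _

lemma wgt_mutate (B : M3) {k i j : Fin 3} (h : i = k ∨ j = k) :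
    wgt (mutate B k) i j = wgt B i j := by
  unfold wgt
  rw [mutate_neg _ h, mutate_neg _ (h.elim Or.inr Or.inl), neg_mul_neg]

lemma cov3 : ∀ u v w i : Fin 3, u ≠ v → u ≠ w → v ≠ w → i = u ∨ i = v ∨ i = w := by decide

lemma triple3 : ∀ u v w : Fin 3, u ≠ v → u ≠ w → v ≠ w →
    (u = 0 ∧ v = 1 ∧ w = 2) ∨ (u = 0 ∧ v = 2 ∧ w = 1) ∨ (u = 1 ∧ v = 0 ∧ w = 2) ∨
    (u = 1 ∧ v = 2 ∧ w = 0) ∨ (u = 2 ∧ v = 0 ∧ w = 1) ∨ (u = 2 ∧ v = 1 ∧ w = 0) := by decide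

lemma f3_eq (B : M3) {u v w : Fin 3} (huv : u ≠ v) (huw : u ≠ w) (hvw : v ≠ w) :
    f3 B = wgt B u v + wgt B u w + wgt B v w := by
  rcases triple3 u v w huv huw hvw with ⟨rfl, rfl, rfl⟩ | ⟨rfl, rfl, rfl⟩ | ⟨rfl, rfl, rfl⟩
    | ⟨rfl, rfl, rfl⟩ | ⟨rfl, rfl, rfl⟩ | ⟨rfl, rfl, rfl⟩ <;>
    simp only [f3, wgt_comm B 1 0, wgt_comm B 2 0, wgt_comm B 2 1] <;> ring

lemma five_edges {B : M3} (h : ∃ i j : Fin 3, i ≠ j ∧ 5 ≤ wgt B i j) :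
    5 ≤ wgt B 0 1 ∨ 5 ≤ wgt B 0 2 ∨ 5 ≤ wgt B 1 2 := by
  obtain ⟨i, j, hij, h5⟩ := h
  have hcov : ∀ x : Fin 3, x = 0 ∨ x = 1 ∨ x = 2 := by decide
  rcases hcov i with rfl | rfl | rfl <;> rcases hcov j with rfl | rfl | rfl <;>
    first
      | exact absurd rfl hij
      | (rw [wgt_comm] at h5; tauto)
      | tauto

lemma acyc {B : M3} {s m t : Fin 3} (hsm : s ≠ m) (hmt : m ≠ t) (hst : s ≠ t)
    (hB : IsSkewSymmetrizable B) (h1 : 0 < B s m) (h2 : 0 < B m t) (h3 : 0 < B s t)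
    (h5 : 5 ≤ wgt B s m ∨ 5 ≤ wgt B m t ∨ 5 ≤ wgt B s t) :
    Q3 (mutate B m) ∧ f3 B < f3 (mutate B m) := by
  have n1 : B m s < 0 := skew_pos_neg hB h1
  have n2 : B t m < 0 := skew_pos_neg hB h2
  have n3 : B t s < 0 := skew_pos_neg hB h3
  have e_st : mutate B m s t = B s t + B s m * B m t := by
    rw [mutate_ne _ hsm hmt.symm, tval_pp h1.le h2.le]
  have e_ts : mutate B m t s = B t s + -(B t m * B m s) := by
    rw [mutate_ne _ (fun h => hmt (h.symm)) hsm, tval_nn n2.le n1.le]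
  have pst : 0 < mutate B m s t := by
    rw [e_st]; nlinarith [mul_pos h1 h2]
  have nts : mutate B m t s < 0 := by
    rw [e_ts]; nlinarith [mul_pos_of_neg_of_neg n2 n1]
  have hgrow : wgt B s t < wgt (mutate B m) s t := by
    unfold wgt
    rw [abs_of_neg (mul_neg_of_pos_of_neg h3 n3),
        abs_of_neg (mul_neg_of_pos_of_neg pst nts), e_st, e_ts]
    nlinarith [mul_pos h3 (mul_pos_of_neg_of_neg n2 n1),
      mul_pos (mul_pos h1 h2) (neg_pos.mpr n3),
      mul_pos (mul_pos h1 h2) (mul_pos_of_neg_of_neg n2 n1)]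
  have wsm : wgt (mutate B m) s m = wgt B s m := wgt_mutate B (Or.inr rfl)
  have wmt : wgt (mutate B m) m t = wgt B m t := wgt_mutate B (Or.inl rfl)
  refine ⟨⟨skew_mutate hB m, ?_, ?_⟩, ?_⟩
  · intro i j hij
    rcases cov3 s m t i hsm hst hmt with h | h | h <;>
      rcases cov3 s m t j hsm hst hmt with h' | h' | h' <;> rw [h, h']
    all_goals first
      | exact absurd (h.trans h'.symm) hij
      | exact pst.ne'
      | exact nts.ne
      | (rw [mutate_neg _ (Or.inl rfl)]
         exact neg_ne_zero.mpr (by first | exact h1.ne' | exact h2.ne' | exact n1.ne | exact n2.ne))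
      | (rw [mutate_neg _ (Or.inr rfl)]
         exact neg_ne_zero.mpr (by first | exact h1.ne' | exact h2.ne' | exact n1.ne | exact n2.ne))
  · rcases h5 with h | h | h
    · exact ⟨s, m, hsm, by rwa [wsm]⟩
    · exact ⟨m, t, hmt, by rwa [wmt]⟩
    · exact ⟨s, t, hst, by linarith⟩
  · rw [f3_eq B hsm hst hmt, f3_eq (mutate B m) hsm hst hmt]
    linarith [hgrow, wsm, wmt]

lemma cyc {B : M3} {u v w : Fin 3} (huv : u ≠ v) (hvw : v ≠ w) (huw : u ≠ w)
    (hB : IsSkewSymmetrizable B) (h1 : 0 < B u v) (h2 : 0 < B v w) (h3 : 0 < B w u)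
    (hmin1 : wgt B u v ≤ wgt B v w) (hmin2 : wgt B u v ≤ wgt B w u)
    (h5 : 5 ≤ wgt B u v ∨ 5 ≤ wgt B v w ∨ 5 ≤ wgt B w u) :
    Q3 (mutate B w) ∧ f3 B < f3 (mutate B w) := by
  have n1 : B v u < 0 := skew_pos_neg hB h1
  have n2 : B w v < 0 := skew_pos_neg hB h2
  have n3 : B u w < 0 := skew_pos_neg hB h3
  have hcyc := skew_cycle hB u v w
  have hp : wgt B u v = -(B u v * B v u) := abs_of_neg (mul_neg_of_pos_of_neg h1 n1)
  have hq : wgt B v w = -(B v w * B w v) := abs_of_neg (mul_neg_of_pos_of_neg h2 n2)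
  have hr : wgt B w u = -(B w u * B u w) := abs_of_neg (mul_neg_of_pos_of_neg h3 n3)
  have ppos : 0 < wgt B u v := abs_pos.mpr (mul_neg_of_pos_of_neg h1 n1).ne
  have qpos : 0 < wgt B v w := abs_pos.mpr (mul_neg_of_pos_of_neg h2 n2).ne
  have rpos : 0 < wgt B w u := abs_pos.mpr (mul_neg_of_pos_of_neg h3 n3).ne
  have hspos : 0 < B u v * B v w * B w u := mul_pos (mul_pos h1 h2) h3
  have hs2 : (B u v * B v w * B w u) ^ 2 = wgt B u v * wgt B v w * wgt B w u := by
    rw [hp, hq, hr]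
    linear_combination (B u v * B v w * B w u) * hcyc
  have hqr5 : 5 * wgt B u v ≤ wgt B v w * wgt B w u := by
    rcases h5 with h | h | h
    · nlinarith
    · nlinarith
    · nlinarith
  have hqr2s : 2 * (B u v * B v w * B w u) < wgt B v w * wgt B w u := by
    nlinarith [hs2, hqr5, hspos, ppos, mul_pos qpos rpos]
  -- entries of the mutated matrix
  have e_uv : mutate B w u v = B u v + -(B u w * B w v) := by
    rw [mutate_ne _ huw hvw, tval_nn n3.le n2.le]
  have e_vu : mutate B w v u = B v u + B v w * B w u := by
    rw [mutate_ne _ hvw huw, tval_pp h2.le h3.le]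
  have hprod : mutate B w u v * mutate B w v u
      = -(wgt B u v + wgt B v w * wgt B w u - 2 * (B u v * B v w * B w u)) := by
    rw [e_uv, e_vu, hp, hq, hr]
    linear_combination -hcyc
  have hprodneg : mutate B w u v * mutate B w v u < 0 := by
    rw [hprod]; linarith
  have hgrow : wgt B u v < wgt (mutate B w) u v := by
    have : wgt (mutate B w) u v = -(mutate B w u v * mutate B w v u) :=
      abs_of_neg hprodneg
    rw [this, hprod]; linarith
  have wvw : wgt (mutate B w) v w = wgt B v w := wgt_mutate B (Or.inr rfl)
  have wwu : wgt (mutate B w) w u = wgt B w u := wgt_mutate B (Or.inl rfl)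
  refine ⟨⟨skew_mutate hB w, ?_, ?_⟩, ?_⟩
  · intro i j hij
    rcases cov3 u v w i huv huw hvw with h | h | h <;>
      rcases cov3 u v w j huv huw hvw with h' | h' | h' <;> rw [h, h']
    all_goals first
      | exact absurd (h.trans h'.symm) hij
      | exact fun h0 => hprodneg.ne (by rw [h0, zero_mul])
      | exact fun h0 => hprodneg.ne (by rw [h0, mul_zero])
      | (rw [mutate_neg _ (Or.inl rfl)]
         exact neg_ne_zero.mpr (by first | exact h2.ne' | exact h3.ne' | exact n2.ne | exact n3.ne))
      | (rw [mutate_neg _ (Or.inr rfl)]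
         exact neg_ne_zero.mpr (by first | exact h2.ne' | exact h3.ne' | exact n2.ne | exact n3.ne))
  · rcases h5 with h | h | h
    · exact ⟨v, w, hvw, by rw [wvw]; linarith⟩
    · exact ⟨v, w, hvw, by rwa [wvw]⟩
    · exact ⟨w, u, Ne.symm huw, by rwa [wwu]⟩
  · rw [f3_eq B huv huw hvw, f3_eq (mutate B w) huv huw hvw]
    have wuw : wgt (mutate B w) u w = wgt B u w := wgt_mutate B (Or.inr rfl)
    linarith [hgrow, wuw, wvw]

lemma cyc3 {B : M3} {u v w : Fin 3} (huv : u ≠ v) (hvw : v ≠ w) (huw : u ≠ w)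
    (hB : IsSkewSymmetrizable B) (h1 : 0 < B u v) (h2 : 0 < B v w) (h3 : 0 < B w u)
    (h5 : 5 ≤ wgt B u v ∨ 5 ≤ wgt B v w ∨ 5 ≤ wgt B w u) :
    ∃ k, Q3 (mutate B k) ∧ f3 B < f3 (mutate B k) := by
  rcases le_or_gt (wgt B u v) (wgt B v w) with a | a
  · rcases le_or_gt (wgt B u v) (wgt B w u) with b | b
    · exact ⟨w, cyc huv hvw huw hB h1 h2 h3 a b h5⟩
    · -- min is wgt B w u : rotation (w,u,v), mutate at v
      exact ⟨v, cyc huw.symm huv (Ne.symm hvw) hB h3 h1 h2 b.le (b.le.trans a)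
        (by tauto)⟩
  · rcases le_or_gt (wgt B v w) (wgt B w u) with b | b
    · -- min is wgt B v w : rotation (v,w,u), mutate at u
      exact ⟨u, cyc hvw (Ne.symm huw) (Ne.symm huv) hB h2 h3 h1 b a.le (by tauto)⟩
    · -- min is wgt B w u : rotation (w,u,v), mutate at v
      exact ⟨v, cyc huw.symm huv (Ne.symm hvw) hB h3 h1 h2 (b.le.trans a.le) b.le
        (by tauto)⟩

lemma key {B : M3} (hQ : Q3 B) : ∃ k, Q3 (mutate B k) ∧ f3 B < f3 (mutate B k) := by
  obtain ⟨hB, hnz, h5⟩ := hQ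
  have h5' := five_edges h5
  have c01 : wgt B 0 1 = wgt B 1 0 := wgt_comm B 0 1
  have c02 : wgt B 0 2 = wgt B 2 0 := wgt_comm B 0 2
  have c12 : wgt B 1 2 = wgt B 2 1 := wgt_comm B 1 2
  rcases (hnz 0 1 (by decide)).lt_or_gt with h01 | h01 <;>
    rcases (hnz 0 2 (by decide)).lt_or_gt with h02 | h02 <;>
    rcases (hnz 1 2 (by decide)).lt_or_gt with h12 | h12
  · -- (−,−,−): acyclic (s,m,t) = (2,1,0)
    exact ⟨1, acyc (by decide) (by decide) (by decide) hB (skew_neg_pos hB h12)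
      (skew_neg_pos hB h01) (skew_neg_pos hB h02) (by simp only [c01, c02, c12] at h5' ⊢; tauto)⟩
  · -- (−,−,+): acyclic (1,2,0)
    exact ⟨2, acyc (by decide) (by decide) (by decide) hB h12
      (skew_neg_pos hB h02) (skew_neg_pos hB h01) (by simp only [c01, c02, c12] at h5' ⊢; tauto)⟩
  · -- (−,+,−): cyclic (1,0,2)
    exact cyc3 (by decide) (by decide) (by decide) hB (skew_neg_pos hB h01) h02
      (skew_neg_pos hB h12) (by simp only [c01, c02, c12] at h5' ⊢; tauto)
  · -- (−,+,+): acyclic (1,0,2)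
    exact ⟨0, acyc (by decide) (by decide) (by decide) hB (skew_neg_pos hB h01)
      h02 h12 (by simp only [c01, c02, c12] at h5' ⊢; tauto)⟩
  · -- (+,−,−): acyclic (2,0,1)
    exact ⟨0, acyc (by decide) (by decide) (by decide) hB (skew_neg_pos hB h02)
      h01 (skew_neg_pos hB h12) (by simp only [c01, c02, c12] at h5' ⊢; tauto)⟩
  · -- (+,−,+): cyclic (0,1,2)
    exact cyc3 (by decide) (by decide) (by decide) hB h01 h12
      (skew_neg_pos hB h02) (by simp only [c01, c02, c12] at h5' ⊢; tauto)
  · -- (+,+,−): acyclic (0,2,1)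
    exact ⟨2, acyc (by decide) (by decide) (by decide) hB h02
      (skew_neg_pos hB h12) h01 (by simp only [c01, c02, c12] at h5' ⊢; tauto)⟩
  · -- (+,+,+): acyclic (0,1,2)
    exact ⟨1, acyc (by decide) (by decide) (by decide) hB h01 h12 h02 (by simp only [c01, c02, c12] at h5' ⊢; tauto)⟩

lemma path_pos {B : M3} {u m v : Fin 3} (hum : u ≠ m) (hmv : m ≠ v) (huv : u ≠ v)
    (hB : IsSkewSymmetrizable B) (hnum : B u m ≠ 0) (hnmv : B m v ≠ 0)
    (hz : B u v = 0) (hpos : 0 < B u m * B m v)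
    (h5 : 5 ≤ wgt B u m ∨ 5 ≤ wgt B m v) : Q3 (mutate B m) := by
  have hzvu : B v u = 0 := skew_zero hB hz
  have e_uv : mutate B m u v = B u v + (|B u m| * B m v + B u m * |B m v|) / 2 :=
    mutate_ne _ hum (Ne.symm hmv)
  have e_vu : mutate B m v u = B v u + (|B v m| * B m u + B v m * |B m u|) / 2 :=
    mutate_ne _ (Ne.symm hmv) hum
  have hnz2 : mutate B m u v ≠ 0 ∧ mutate B m v u ≠ 0 := by
    rcases hnum.lt_or_gt with hsg | hsg
    · -- B u m < 0, hence B m v < 0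
      have hmvneg : B m v < 0 := by nlinarith
      have hmu : 0 < B m u := skew_neg_pos hB hsg
      have hvm : 0 < B v m := skew_neg_pos hB hmvneg
      constructor
      · rw [e_uv, tval_nn hsg.le hmvneg.le, hz, zero_add]
        exact neg_ne_zero.mpr hpos.ne'
      · rw [e_vu, tval_pp hvm.le hmu.le, hzvu, zero_add]
        exact (mul_pos hvm hmu).ne'
    · -- B u m > 0, hence B m v > 0
      have hmvpos : 0 < B m v := by nlinarith
      have hmu : B m u < 0 := skew_pos_neg hB hsg
      have hvm : B v m < 0 := skew_pos_neg hB hmvpos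
      constructor
      · rw [e_uv, tval_pp hsg.le hmvpos.le, hz, zero_add]
        exact hpos.ne'
      · rw [e_vu, tval_nn hvm.le hmu.le, hzvu, zero_add]
        exact neg_ne_zero.mpr (mul_pos_of_neg_of_neg hvm hmu).ne'
  refine ⟨skew_mutate hB m, ?_, ?_⟩
  · intro i j hij
    have hmu' : B m u ≠ 0 := skew_ne hB hnum
    have hvm' : B v m ≠ 0 := skew_ne hB hnmv
    rcases cov3 u m v i hum huv hmv with h | h | h <;>
      rcases cov3 u m v j hum huv hmv with h' | h' | h' <;> rw [h, h']
    all_goals first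
      | exact absurd (h.trans h'.symm) hij
      | exact hnz2.1
      | exact hnz2.2
      | (rw [mutate_neg _ (Or.inl rfl)]
         exact neg_ne_zero.mpr (by first | exact hnum | exact hnmv | exact hmu' | exact hvm'))
      | (rw [mutate_neg _ (Or.inr rfl)]
         exact neg_ne_zero.mpr (by first | exact hnum | exact hnmv | exact hmu' | exact hvm'))
  · rcases h5 with h | h
    · exact ⟨u, m, hum, by rwa [wgt_mutate B (Or.inr rfl)]⟩
    · exact ⟨m, v, hmv, by rwa [wgt_mutate B (Or.inl rfl)]⟩

lemma path {B : M3} {u m v : Fin 3} (hum : u ≠ m) (hmv : m ≠ v) (huv : u ≠ v)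
    (hB : IsSkewSymmetrizable B) (hnum : B u m ≠ 0) (hnmv : B m v ≠ 0)
    (hz : B u v = 0) (h5 : 5 ≤ wgt B u m ∨ 5 ≤ wgt B m v) :
    ∃ C, (∃ l : List (Fin 3), C = l.foldl mutate B) ∧ Q3 C := by
  rcases (mul_ne_zero hnum hnmv).lt_or_gt with hneg | hpos
  · -- first mutate at u to flip the sign
    have hzvu : B v u = 0 := skew_zero hB hz
    have e1 : mutate B u u m = -B u m := mutate_neg _ (Or.inl rfl)
    have e2 : mutate B u m v = B m v := by
      rw [mutate_ne _ (Ne.symm hum) (fun h => huv (h.symm ▸ rfl) : v ≠ u), hz]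
      simp
    have e3 : mutate B u v m = B v m := by
      rw [mutate_ne _ (fun h => huv (h ▸ rfl) : v ≠ u) (Ne.symm hum), hzvu]
      simp
    have e4 : mutate B u u v = 0 := by rw [mutate_neg _ (Or.inl rfl), hz, neg_zero]
    have hw1 : wgt (mutate B u) u m = wgt B u m := wgt_mutate B (Or.inl rfl)
    have hw2 : wgt (mutate B u) m v = wgt B m v := by unfold wgt; rw [e2, e3]
    have hQ := path_pos hum hmv huv (skew_mutate hB u)
      (by rw [e1]; exact neg_ne_zero.mpr hnum) (by rw [e2]; exact hnmv) e4
      (by rw [e1, e2]; nlinarith) (by rw [hw1, hw2]; exact h5)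
    exact ⟨mutate (mutate B u) m, ⟨[u, m], rfl⟩, hQ⟩
  · exact ⟨mutate B m, ⟨[m], rfl⟩, path_pos hum hmv huv hB hnum hnmv hz hpos h5⟩

lemma exists_third : ∀ u v : Fin 3, u ≠ v →
    ∃ m, u ≠ m ∧ m ≠ v ∧ (∀ i : Fin 3, i = u ∨ i = m ∨ i = v) := by decide

lemma step1 {B : M3} (hB : IsSkewSymmetrizable B)
    (hdeg : ∀ k : Fin 3, ∃ j, j ≠ k ∧ B k j ≠ 0)
    (hw : ∃ i j : Fin 3, i ≠ j ∧ 5 ≤ wgt B i j) :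
    ∃ C, (∃ l : List (Fin 3), C = l.foldl mutate B) ∧ Q3 C := by
  by_cases hfull : ∀ i j : Fin 3, i ≠ j → B i j ≠ 0
  · exact ⟨B, ⟨[], rfl⟩, hB, hfull, hw⟩
  · push_neg at hfull
    obtain ⟨u, v, huv, hz⟩ := hfull
    obtain ⟨m, hum, hmv, hcov⟩ := exists_third u v huv
    have hzvu : B v u = 0 := skew_zero hB hz
    have wuv0 : wgt B u v = 0 := by unfold wgt; rw [hz, zero_mul, abs_zero]
    have wvu0 : wgt B v u = 0 := by unfold wgt; rw [hzvu, zero_mul, abs_zero]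
    have hBum : B u m ≠ 0 := by
      obtain ⟨j, hju, hj⟩ := hdeg u
      rcases hcov j with h | h | h
      · exact absurd h hju
      · rwa [h] at hj
      · rw [h] at hj; exact absurd hz hj
    have hBmv : B m v ≠ 0 := by
      obtain ⟨j, hjv, hj⟩ := hdeg v
      rcases hcov j with h | h | h
      · rw [h] at hj; exact absurd hzvu hj
      · rw [h] at hj; exact skew_ne hB hj
      · exact absurd h hjv
    have h5 : 5 ≤ wgt B u m ∨ 5 ≤ wgt B m v := by
      obtain ⟨i, j, hij, h5⟩ := hw
      rcases hcov i with h | h | h <;> rcases hcov j with h' | h' | h' <;>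
        rw [h, h'] at h5 <;>
        first
          | exact absurd (h.trans h'.symm) hij
          | (exfalso; omega)
          | exact Or.inl h5
          | exact Or.inr h5
          | exact Or.inl (by rwa [wgt_comm])
          | exact Or.inr (by rwa [wgt_comm])
    exact path hum hmv huv hB hBum hBmv hz h5

def iterMut (F : M3 → Fin 3) (C : M3) : ℕ → M3
  | 0 => C
  | n+1 => mutate (iterMut F C n) (F (iterMut F C n))

lemma inf_of_Q3 {C : M3} (hQ : Q3 C) : (mutationClass C).Infinite := by
  have hkey : ∀ M : M3, Q3 M → ∃ k, Q3 (mutate M k) ∧ f3 M < f3 (mutate M k) :=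
    fun M h => key h
  choose! F hF1 hF2 using hkey
  have hg : ∀ n, Q3 (iterMut F C n) ∧ iterMut F C n ∈ mutationClass C := by
    intro n; induction n with
    | zero => exact ⟨hQ, ⟨[], rfl⟩⟩
    | succ n ih =>
      obtain ⟨hq, ⟨l, hl⟩⟩ := ih
      refine ⟨hF1 _ hq, ⟨l ++ [F (iterMut F C n)], ?_⟩⟩
      rw [List.foldl_append, ← hl]
      rfl
  have hmono : StrictMono fun n => f3 (iterMut F C n) :=
    strictMono_nat_of_lt_succ fun n => hF2 _ (hg n).1
  have hinj : Function.Injective (iterMut F C) :=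
    fun a b hab => hmono.injective (congrArg f3 hab)
  exact Set.infinite_of_injective_forall_mem hinj fun n => (hg n).2

end MutAux

/-- A connected skew-symmetrizable `3 × 3` matrix with an edge of weight at least `5`
has infinite mutation class. -/
theorem order_three_big_weight_mutationInfinite (B : Matrix (Fin 3) (Fin 3) ℤ)
    (hB : IsSkewSymmetrizable B)
    (hconn : (SimpleGraph.fromRel (fun i j => B i j ≠ 0)).Connected)
    (hw : ∃ i j : Fin 3, i ≠ j ∧ 5 ≤ |B i j * B j i|) :
    (mutationClass B).Infinite := by
  have hdeg : ∀ k : Fin 3, ∃ j, j ≠ k ∧ B k j ≠ 0 := by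
    intro k
    have : ∀ k : Fin 3, ∃ j : Fin 3, j ≠ k := by decide
    obtain ⟨j0, hj0⟩ := this k
    obtain ⟨p⟩ := hconn.preconnected k j0
    cases p with
    | nil => exact absurd rfl hj0
    | cons h q =>
      rw [SimpleGraph.fromRel_adj] at h
      obtain ⟨hne', hor⟩ := h
      rcases hor with h' | h'
      · exact ⟨_, Ne.symm hne', h'⟩
      · exact ⟨_, Ne.symm hne', MutAux.skew_ne hB h'⟩
  obtain ⟨C, ⟨l, hC⟩, hQ⟩ := MutAux.step1 hB hdeg hw
  have hsub : mutationClass C ⊆ mutationClass B := by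
    rintro M ⟨l', hM⟩
    exact ⟨l ++ l', by rw [List.foldl_append, ← hC, hM]⟩
  exact (MutAux.inf_of_Q3 hQ).mono hsub
end

section
/- A skew-symmetrizable matrix is mutation-finite if and only if its diagram is mutation-finite: for a skew-symmetrizable n×n integer matrix B, the mutation class of B is finite if and only if the set of functions {(i,j) ↦ b'_ij · b'_ji : B' mutation-equivalent to B} is finite. -/
open Matrix

lemma even_aux (a b : ℤ) : 2 ∣ |a| * b + a * |b| := by
  rcases abs_choice a with h | h <;> rcases abs_choice b with h' | h' <;> rw [h, h']
  · exact ⟨a * b, by ring⟩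
  · exact ⟨0, by ring⟩
  · exact ⟨0, by ring⟩
  · exact ⟨-(a * b), by ring⟩

lemma key_aux (a b a' b' di dj dk : ℤ) (hdi : 0 < di) (hdj : 0 < dj) (hdk : 0 < dk)
    (ha : a * dk = -(a' * di)) (hb : b * dj = -(b' * dk)) :
    (|a| * b + a * |b|) / 2 * dj = -((|b'| * a' + b' * |a'|) / 2 * di) := by
  obtain ⟨t, ht⟩ := even_aux a b
  obtain ⟨s, hs⟩ := even_aux b' a'
  rw [ht, hs, Int.mul_ediv_cancel_left _ (by norm_num), Int.mul_ediv_cancel_left _ (by norm_num)]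
  have habs : |a| * dk = |a'| * di := by
    rw [← abs_of_pos hdk, ← abs_mul, ha, abs_neg, abs_mul, abs_of_pos hdi]
  have hbabs : |b| * dj = |b'| * dk := by
    rw [← abs_of_pos hdj, ← abs_mul, hb, abs_neg, abs_mul, abs_of_pos hdk]
  have main : (2 * t) * dj * dk = -((2 * s) * di * dk) := by
    rw [← ht, ← hs]
    linear_combination (b * dj) * habs + (|a'| * di) * hb + (a * dk) * hbabs + (|b'| * dk) * ha
  have h2 : (0:ℤ) < 2 * dk := by linarith
  have := mul_right_cancel₀ (ne_of_gt hdk) (by linarith [main] : t * dj * dk = (-(s * di)) * dk)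
  exact this

lemma mutate_skew {n : ℕ} (B : Matrix (Fin n) (Fin n) ℤ) (d : Fin n → ℤ)
    (hd : ∀ i, 0 < d i) (h : ∀ i j, B i j * d j = -(B j i * d i)) (k : Fin n) :
    ∀ i j, mutate B k i j * d j = -(mutate B k j i * d i) := by
  intro i j
  simp only [mutate, Matrix.of_apply]
  by_cases hc : i = k ∨ j = k
  · have hc' : j = k ∨ i = k := hc.symm
    rw [if_pos hc, if_pos hc']
    have := h i j; linarith
  · have hc' : ¬(j = k ∨ i = k) := fun h' => hc h'.symm
    rw [if_neg hc, if_neg hc']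
    have hk := key_aux (B i k) (B k j) (B k i) (B j k) (d i) (d j) (d k)
      (hd i) (hd j) (hd k) (h i k) (h k j)
    have := h i j
    linarith [hk]

lemma class_skew {n : ℕ} (B : Matrix (Fin n) (Fin n) ℤ) (d : Fin n → ℤ)
    (hd : ∀ i, 0 < d i) (h : ∀ i j, B i j * d j = -(B j i * d i)) :
    ∀ B' ∈ mutationClass B, ∀ i j, B' i j * d j = -(B' j i * d i) := by
  rintro B' ⟨l, rfl⟩
  induction l generalizing B with
  | nil => exact h
  | cons k l ih => exact ih (mutate B k) (mutate_skew B d hd h k)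

/-- A skew-symmetrizable matrix is mutation-finite iff its diagram is mutation-finite,
i.e. the set of weight functions `(i, j) ↦ b'_ij * b'_ji` over the mutation class is finite. -/
theorem mutationFinite_iff_diagram_mutationFinite {n : ℕ}
    (B : Matrix (Fin n) (Fin n) ℤ) (hB : IsSkewSymmetrizable B) :
    (mutationClass B).Finite ↔
      ((fun B' : Matrix (Fin n) (Fin n) ℤ => fun i j : Fin n => B' i j * B' j i) ''
        mutationClass B).Finite := by
  constructor
  · exact fun h => h.image _
  · intro hF
    obtain ⟨d, hd, hskew⟩ := hB
    set f : Matrix (Fin n) (Fin n) ℤ → (Fin n → Fin n → ℤ) :=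
      fun B' => fun i j => B' i j * B' j i with hf
    set g : Matrix (Fin n) (Fin n) ℤ → (Fin n → Fin n → ℤ) × (Fin n → Fin n → Bool) :=
      fun B' => (f B', fun i j => decide (0 ≤ B' i j)) with hg
    have hinj : Set.InjOn g (mutationClass B) := by
      intro B1 h1 B2 h2 heq
      have hf12 : f B1 = f B2 := congrArg Prod.fst heq
      have hsgn : (fun i j => decide (0 ≤ B1 i j)) = fun i j => decide (0 ≤ B2 i j) :=
        congrArg Prod.snd heq
      funext i j
      have e1 := class_skew B d hd hskew B1 h1 i j
      have e2 := class_skew B d hd hskew B2 h2 i j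
      have hp : B1 i j * B1 j i = B2 i j * B2 j i := by
        have := congrFun (congrFun hf12 i) j; simpa [hf] using this
      have q1 : B1 i j * B1 j i * d i = -(B1 i j ^ 2 * d j) := by
        linear_combination (B1 i j) * e1
      have q2 : B2 i j * B2 j i * d i = -(B2 i j ^ 2 * d j) := by
        linear_combination (B2 i j) * e2
      have hsq : B1 i j ^ 2 * d j = B2 i j ^ 2 * d j := by
        linear_combination q1 - q2 - (d i) * hp
      have hsq' : B1 i j ^ 2 = B2 i j ^ 2 :=
        mul_right_cancel₀ (ne_of_gt (hd j)) hsq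
      have hcases : B1 i j = B2 i j ∨ B1 i j = -(B2 i j) := sq_eq_sq_iff_eq_or_eq_neg.mp hsq'
      have hs : (0 ≤ B1 i j) ↔ (0 ≤ B2 i j) := by
        have := congrFun (congrFun hsgn i) j
        simpa using this
      rcases hcases with h' | h'
      · exact h'
      · omega
    have hsub : g '' mutationClass B ⊆
        ((fun B' : Matrix (Fin n) (Fin n) ℤ => fun i j : Fin n => B' i j * B' j i) ''
          mutationClass B) ×ˢ (Set.univ : Set (Fin n → Fin n → Bool)) := by
      rintro _ ⟨B', hB', rfl⟩
      exact ⟨⟨B', hB', rfl⟩, Set.mem_univ _⟩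
    have : (g '' mutationClass B).Finite := (hF.prod Set.finite_univ).subset hsub
    exact Set.Finite.of_finite_image this hinj
end

section
/- Let B be a skew-symmetrizable n×n integer matrix and let i_0, i_1, …, i_{k−1} be any indices, with i_k = i_0. Then the product ∏_{t=0}^{k−1} |b_{i_t i_{t+1}} · b_{i_{t+1} i_t}| is the square of an integer. In particular, the product of the weights of edges of the diagram of B along any cycle (in particular any chordless cycle) is a perfect square. -/
open Matrix

/-- For a skew-symmetrizable matrix, the product of the weights `|b_ij * b_ji|` along any
cycle of indices is a perfect square. -/
theorem cycle_weight_product_isSquare {n : ℕ} (B : Matrix (Fin n) (Fin n) ℤ)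
    (hB : IsSkewSymmetrizable B) (k : ℕ) (c : ℕ → Fin n) (hc : c k = c 0) :
    IsSquare (∏ t ∈ Finset.range k, |B (c t) (c (t + 1)) * B (c (t + 1)) (c t)|) := by
  obtain ⟨d, hd, hskew⟩ := hB
  -- key per-edge identity: |b_ij * b_ji| * d i = (b_ij)^2 * d j
  have key : ∀ i j, |B i j * B j i| * d i = (B i j) ^ 2 * d j := by
    intro i j
    have h1 : B i j * B j i * d i = -((B i j) ^ 2 * d j) := by
      have := hskew i j
      linear_combination B i j * this
    have h2 : |B i j * B j i * d i| = |B i j * B j i| * d i := by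
      rw [abs_mul, abs_of_pos (hd i)]
    have h3 : |B i j * B j i * d i| = (B i j) ^ 2 * d j := by
      rw [h1, abs_neg, abs_of_nonneg (mul_nonneg (sq_nonneg _) (hd j).le)]
    rw [← h2, h3]
  set P := ∏ t ∈ Finset.range k, |B (c t) (c (t + 1)) * B (c (t + 1)) (c t)| with hP
  set Q := ∏ t ∈ Finset.range k, B (c t) (c (t + 1)) with hQ
  set D := ∏ t ∈ Finset.range k, d (c t) with hD
  have hD' : ∏ t ∈ Finset.range k, d (c (t + 1)) = D := by
    have e1 : ∏ t ∈ Finset.range (k + 1), d (c t)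
        = (∏ t ∈ Finset.range k, d (c (t + 1))) * d (c 0) :=
      Finset.prod_range_succ' _ _
    have e2 : ∏ t ∈ Finset.range (k + 1), d (c t)
        = (∏ t ∈ Finset.range k, d (c t)) * d (c k) :=
      Finset.prod_range_succ _ _
    have hd0 : d (c 0) ≠ 0 := (hd (c 0)).ne'
    rw [hc] at e2
    have : d (c 0) * ∏ t ∈ Finset.range k, d (c (t + 1)) = d (c 0) * D := by
      rw [hD, mul_comm, ← e1, e2]; ring
    exact mul_left_cancel₀ hd0 this
  have hPD : P * D = Q ^ 2 * D := by
    calc P * D = ∏ t ∈ Finset.range k,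
          (|B (c t) (c (t + 1)) * B (c (t + 1)) (c t)| * d (c t)) := by
          rw [hP, hD, ← Finset.prod_mul_distrib]
      _ = ∏ t ∈ Finset.range k, ((B (c t) (c (t + 1))) ^ 2 * d (c (t + 1))) := by
          exact Finset.prod_congr rfl fun t _ => key (c t) (c (t + 1))
      _ = (∏ t ∈ Finset.range k, (B (c t) (c (t + 1))) ^ 2)
            * ∏ t ∈ Finset.range k, d (c (t + 1)) := Finset.prod_mul_distrib
      _ = Q ^ 2 * D := by rw [hD', hQ, Finset.prod_pow]
  have hDne : D ≠ 0 := by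
    rw [hD]
    exact Finset.prod_ne_zero_iff.mpr fun t _ => (hd (c t)).ne'
  have : P = Q ^ 2 := mul_right_cancel₀ hDne hPD
  exact this ▸ ⟨Q, sq Q⟩
end

section
/- If all weights of the diagram of a skew-symmetrizable matrix are perfect squares, then the diagram is represented by a skew-symmetric matrix: let B be a skew-symmetrizable n×n integer matrix such that for all i, j the number |b_ij · b_ji| is the square of an integer. Then there exists a skew-symmetric integer n×n matrix C with c_ij · c_ji = b_ij · b_ji for all i, j and such that c_ij > 0 exactly when b_ij > 0 (so C has the same diagram as B). -/
open Matrix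

/-- If all weights of the diagram of a skew-symmetrizable matrix are perfect squares, the
diagram is represented by a skew-symmetric matrix. -/
theorem exists_skewSymmetric_same_diagram {n : ℕ} (B : Matrix (Fin n) (Fin n) ℤ)
    (hB : IsSkewSymmetrizable B) (hsq : ∀ i j, IsSquare |B i j * B j i|) :
    ∃ C : Matrix (Fin n) (Fin n) ℤ, (∀ i j, C j i = -C i j) ∧
      (∀ i j, C i j * C j i = B i j * B j i) ∧
      (∀ i j, 0 < C i j ↔ 0 < B i j) := by
  obtain ⟨d, hd, h⟩ := hB
  have hzero : ∀ i j, B i j = 0 → B j i = 0 := by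
    intro i j hij
    have := h i j; have hdi := hd i
    rw [hij] at this; nlinarith
  have hneg : ∀ i j, 0 < B i j → B j i < 0 := by
    intro i j hij
    have := h i j; have hdi := hd i; have hdj := hd j; nlinarith
  have hpos : ∀ i j, B i j < 0 → 0 < B j i := by
    intro i j hij
    have := h i j; have hdi := hd i; have hdj := hd j; nlinarith
  have hsqrt : ∀ i j, Int.sqrt |B i j * B j i| * Int.sqrt |B i j * B j i| = |B i j * B j i| := by
    intro i j
    obtain ⟨r, hr⟩ := hsq i j
    rw [hr, Int.sqrt_eq]
    exact Int.natAbs_mul_self' r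
  have hsym : ∀ i j, |B i j * B j i| = |B j i * B i j| := by
    intro i j; rw [mul_comm]
  refine ⟨Matrix.of fun i j => Int.sign (B i j) * Int.sqrt |B i j * B j i|, ?_, ?_, ?_⟩
  · intro i j
    simp only [Matrix.of_apply]
    rcases lt_trichotomy (B i j) 0 with hij | hij | hij
    · rw [Int.sign_eq_one_of_pos (hpos i j hij), Int.sign_eq_neg_one_of_neg hij, ← hsym]
      ring
    · rw [hij, hzero i j hij]; simp
    · rw [Int.sign_eq_one_of_pos hij, Int.sign_eq_neg_one_of_neg (hneg i j hij), ← hsym]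
      ring
  · intro i j
    simp only [Matrix.of_apply]
    rcases lt_trichotomy (B i j) 0 with hij | hij | hij
    · have hji := hpos i j hij
      rw [Int.sign_eq_neg_one_of_neg hij, Int.sign_eq_one_of_pos hji, ← hsym]
      have hs := hsqrt j i
      have habs : |B j i * B i j| = -(B j i * B i j) := abs_of_neg (by nlinarith)
      linarith [hs, habs, mul_comm (B i j) (B j i), mul_self_nonneg (Int.sqrt |B j i * B i j|)]
    · rw [hij, hzero i j hij]; simp
    · have hji := hneg i j hij
      rw [Int.sign_eq_one_of_pos hij, Int.sign_eq_neg_one_of_neg hji, ← hsym]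
      have hs := hsqrt j i
      have habs : |B j i * B i j| = -(B j i * B i j) := abs_of_neg (by nlinarith)
      linarith [hs, habs, mul_comm (B i j) (B j i), mul_self_nonneg (Int.sqrt |B j i * B i j|)]
  · intro i j
    simp only [Matrix.of_apply]
    constructor
    · intro hc
      rcases lt_trichotomy (B i j) 0 with hij | hij | hij
      · exfalso
        rw [Int.sign_eq_neg_one_of_neg hij] at hc
        have : (0:ℤ) ≤ Int.sqrt |B i j * B j i| := Int.sqrt_nonneg _
        nlinarith
      · exfalso; rw [hij] at hc; simp at hc
      · exact hij
    · intro hij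
      have hji := hneg i j hij
      have habs : 0 < |B i j * B j i| := abs_pos.mpr (by nlinarith)
      have hs := hsqrt i j
      have hnn := Int.sqrt_nonneg |B i j * B j i|
      have hpos' : 0 < Int.sqrt |B i j * B j i| := by nlinarith
      rw [Int.sign_eq_one_of_pos hij]
      nlinarith
end

section
/- The mutation-finite matrix of type G̃_2 admits an unfolding: the 5×5 skew-symmetric matrix C with rows (0, 0, 0, 1, 0), (0, 0, 0, 1, 0), (0, 0, 0, 1, 0), (−1, −1, −1, 0, 1), (0, 0, 0, −1, 0) is an unfolding of the 3×3 skew-symmetrizable matrix B with rows (0, 3, 0), (−1, 0, 1), (0, −1, 0), with respect to the index sets E_1 = {1, 2, 3}, E_2 = {4}, E_3 = {5}. -/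
open Matrix

/-- Assertions (1)–(2) of the definition of unfolding, for the fibers `E i = π ⁻¹ {i}`:
(1) for all `i` and all `b` the sum of `C a b` over `a ∈ E i` equals `B i (π b)`;
(2) if `B (π a) (π b) ≥ 0` then `C a b ≥ 0`. -/
def SatisfiesUnfoldingConds {m n : ℕ} (π : Fin m → Fin n)
    (B : Matrix (Fin n) (Fin n) ℤ) (C : Matrix (Fin m) (Fin m) ℤ) : Prop :=
  (∀ (i : Fin n) (b : Fin m),
      (∑ a ∈ Finset.univ.filter (fun a => π a = i), C a b) = B i (π b)) ∧
  (∀ a b : Fin m, 0 ≤ B (π a) (π b) → 0 ≤ C a b)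

/-- The composite mutation `μ̂_i`: the composition of the mutations `μ_a` over all
`a ∈ E i = π ⁻¹ {i}`, performed in a fixed order. -/
def compMutate {m n : ℕ} (π : Fin m → Fin n) (C : Matrix (Fin m) (Fin m) ℤ)
    (i : Fin n) : Matrix (Fin m) (Fin m) ℤ :=
  ((Finset.univ.filter (fun a => π a = i)).sort (· ≤ ·)).foldl mutate C

/-- `C` is an unfolding of `B` (w.r.t. the index sets `E i = π ⁻¹ {i}`): after any finite
sequence of composite mutations, assertions (1)–(2) hold for the correspondingly
mutated matrices. -/
def IsUnfolding {m n : ℕ} (π : Fin m → Fin n) (B : Matrix (Fin n) (Fin n) ℤ)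
    (C : Matrix (Fin m) (Fin m) ℤ) : Prop :=
  ∀ l : List (Fin n),
    SatisfiesUnfoldingConds π (l.foldl mutate B) (l.foldl (compMutate π) C)

/-!
The pairs obtained from `(B, C)` by simultaneous mutations `(μ_k, μ̂_k)` form a set of only twelve
pairs, closed under all three simultaneous mutations, so assertions (1)–(2) need only be checked on
these twelve pairs.
-/
theorem compMutate_eq_foldl {m n : ℕ} {π : Fin m → Fin n} {i : Fin n} {l : List (Fin m)}
    (hl : l.Pairwise (· < ·)) (hfibre : ∀ a, a ∈ l ↔ π a = i) (C : Matrix (Fin m) (Fin m) ℤ) :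
    compMutate π C i = l.foldl mutate C := by
  have hfilter : Finset.univ.filter (π · = i) = l.toFinset := by
    ext a
    simp [hfibre]
  rw [compMutate, hfilter, (List.toFinset_sort _ hl.nodup).2 (hl.imp le_of_lt)]

theorem isUnfolding_of_invariant {m n : ℕ} (π : Fin m → Fin n)
    (S : Set (Matrix (Fin n) (Fin n) ℤ × Matrix (Fin m) (Fin m) ℤ))
    (hmutate : ∀ p ∈ S, ∀ i, (mutate p.1 i, compMutate π p.2 i) ∈ S)
    (hconds : ∀ p ∈ S, SatisfiesUnfoldingConds π p.1 p.2)
    {B : Matrix (Fin n) (Fin n) ℤ} {C : Matrix (Fin m) (Fin m) ℤ} (hBC : (B, C) ∈ S) :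
    IsUnfolding π B C := by
  intro l
  induction l generalizing B C with
  | nil => exact hconds _ hBC
  | cons k l ih => exact ih (hmutate _ hBC k)

def g2Fold : Fin 5 → Fin 3 := ![0, 0, 0, 1, 2]

def g2Fibre : Fin 3 → List (Fin 5) := ![[0, 1, 2], [3], [4]]

theorem compMutate_g2Fold (C : Matrix (Fin 5) (Fin 5) ℤ) (i : Fin 3) :
    compMutate g2Fold C i = (g2Fibre i).foldl mutate C :=
  compMutate_eq_foldl (by revert i; decide) (by revert i; decide) C

-- `(B, C)` together with everything it reaches by simultaneous mutation.
def g2Orbit : List (Matrix (Fin 3) (Fin 3) ℤ × Matrix (Fin 5) (Fin 5) ℤ) :=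
  [(!![0, 3, 0; -1, 0, 1; 0, -1, 0],
      !![0, 0, 0, 1, 0; 0, 0, 0, 1, 0; 0, 0, 0, 1, 0; -1, -1, -1, 0, 1; 0, 0, 0, -1, 0]),
   (!![0, -3, 0; 1, 0, 1; 0, -1, 0],
      !![0, 0, 0, -1, 0; 0, 0, 0, -1, 0; 0, 0, 0, -1, 0; 1, 1, 1, 0, 1; 0, 0, 0, -1, 0]),
   (!![0, -3, 3; 1, 0, -1; -1, 1, 0],
      !![0, 0, 0, -1, 1; 0, 0, 0, -1, 1; 0, 0, 0, -1, 1; 1, 1, 1, 0, -1; -1, -1, -1, 1, 0]),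
   (!![0, 3, 0; -1, 0, -1; 0, 1, 0],
      !![0, 0, 0, 1, 0; 0, 0, 0, 1, 0; 0, 0, 0, 1, 0; -1, -1, -1, 0, -1; 0, 0, 0, 1, 0]),
   (!![0, -3, 0; 1, 0, -1; 0, 1, 0],
      !![0, 0, 0, -1, 0; 0, 0, 0, -1, 0; 0, 0, 0, -1, 0; 1, 1, 1, 0, -1; 0, 0, 0, 1, 0]),
   (!![0, 3, -3; -1, 0, 2; 1, -2, 0],
      !![0, 0, 0, 1, -1; 0, 0, 0, 1, -1; 0, 0, 0, 1, -1; -1, -1, -1, 0, 2; 1, 1, 1, -2, 0]),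
   (!![0, 0, -3; 0, 0, 1; 1, -1, 0],
      !![0, 0, 0, 0, -1; 0, 0, 0, 0, -1; 0, 0, 0, 0, -1; 0, 0, 0, 0, 1; 1, 1, 1, -1, 0]),
   (!![0, 3, -3; -1, 0, 1; 1, -1, 0],
      !![0, 0, 0, 1, -1; 0, 0, 0, 1, -1; 0, 0, 0, 1, -1; -1, -1, -1, 0, 1; 1, 1, 1, -1, 0]),
   (!![0, -3, 3; 1, 0, -2; -1, 2, 0],
      !![0, 0, 0, -1, 1; 0, 0, 0, -1, 1; 0, 0, 0, -1, 1; 1, 1, 1, 0, -2; -1, -1, -1, 2, 0]),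
   (!![0, 0, 3; 0, 0, 1; -1, -1, 0],
      !![0, 0, 0, 0, 1; 0, 0, 0, 0, 1; 0, 0, 0, 0, 1; 0, 0, 0, 0, 1; -1, -1, -1, -1, 0]),
   (!![0, 0, -3; 0, 0, -1; 1, 1, 0],
      !![0, 0, 0, 0, -1; 0, 0, 0, 0, -1; 0, 0, 0, 0, -1; 0, 0, 0, 0, -1; 1, 1, 1, 1, 0]),
   (!![0, 0, 3; 0, 0, -1; -1, 1, 0],
      !![0, 0, 0, 0, 1; 0, 0, 0, 0, 1; 0, 0, 0, 0, 1; 0, 0, 0, 0, -1; -1, -1, -1, 1, 0])]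

theorem mutate_mem_g2Orbit : ∀ p ∈ g2Orbit, ∀ i,
    (mutate p.1 i, compMutate g2Fold p.2 i) ∈ g2Orbit := by
  simp only [compMutate_g2Fold]
  decide

theorem satisfiesUnfoldingConds_of_mem_g2Orbit :
    ∀ p ∈ g2Orbit, SatisfiesUnfoldingConds g2Fold p.1 p.2 := by
  -- `Matrix` is not reducible, so instance search does not see `Int.decLe` in `0 ≤ M i j`.
  let _ {ι κ : Type} (M : Matrix ι κ ℤ) (i : ι) (j : κ) : Decidable (0 ≤ M i j) := Int.decLe _ _
  unfold SatisfiesUnfoldingConds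
  decide

/-- The mutation-finite matrix of type `G̃_2` admits the stated unfolding, with
`E_1 = {1, 2, 3}`, `E_2 = {4}`, `E_3 = {5}`. -/
theorem unfolding_G2_affine :
    IsUnfolding (![0, 0, 0, 1, 2] : Fin 5 → Fin 3)
      !![0, 3, 0; -1, 0, 1; 0, -1, 0]
      !![0, 0, 0, 1, 0; 0, 0, 0, 1, 0; 0, 0, 0, 1, 0;
         -1, -1, -1, 0, 1; 0, 0, 0, -1, 0] :=
  isUnfolding_of_invariant g2Fold {p | p ∈ g2Orbit} mutate_mem_g2Orbit
    satisfiesUnfoldingConds_of_mem_g2Orbit List.mem_cons_self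
end

section
/- The skew-symmetrizable matrix of type G̃_2, namely the 3×3 integer matrix B with rows (0, 3, 0), (−1, 0, 1), (0, −1, 0), has finite mutation class. -/
open Matrix

/-- The 12 matrices in the mutation class of the `G̃_2` matrix. -/
def G2List : List (Matrix (Fin 3) (Fin 3) ℤ) :=
  [!![0, -3, 0; 1, 0, -1; 0, 1, 0],
   !![0, -3, 0; 1, 0, 1; 0, -1, 0],
   !![0, -3, 3; 1, 0, -2; -1, 2, 0],
   !![0, -3, 3; 1, 0, -1; -1, 1, 0],
   !![0, 0, -3; 0, 0, -1; 1, 1, 0],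
   !![0, 0, -3; 0, 0, 1; 1, -1, 0],
   !![0, 0, 3; 0, 0, -1; -1, 1, 0],
   !![0, 0, 3; 0, 0, 1; -1, -1, 0],
   !![0, 3, -3; -1, 0, 1; 1, -1, 0],
   !![0, 3, -3; -1, 0, 2; 1, -2, 0],
   !![0, 3, 0; -1, 0, -1; 0, 1, 0],
   !![0, 3, 0; -1, 0, 1; 0, -1, 0]]

lemma G2List_closed : ∀ M ∈ G2List, ∀ k, mutate M k ∈ G2List := by decide

lemma foldl_mem (l : List (Fin 3)) :
    ∀ M ∈ G2List, l.foldl mutate M ∈ G2List := by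
  induction l with
  | nil => intro M hM; exact hM
  | cons k l ih => intro M hM; exact ih _ (G2List_closed M hM k)

/-- The skew-symmetrizable matrix of type `G̃_2` has finite mutation class. -/
theorem G2_affine_mutationFinite :
    (mutationClass !![0, 3, 0; -1, 0, 1; 0, -1, 0]).Finite := by
  apply Set.Finite.subset (G2List.finite_toSet)
  rintro B' ⟨l, rfl⟩
  exact foldl_mem l _ (by decide)
end
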